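/- arXiv:2207.09513 — 2 statements merged into one kernel-verified Lean document; each statement's English description precedes it below -/
import Mathlib

section
/- Let A be a commutative ring, I ⊂ A a finitely generated ideal, B a faithfully flat A-algebra, M', M, M'' finite projective A-modules with A-linear maps M' → M → M''. If 0 → M' ⊗_A B → M ⊗_A B → M'' ⊗_A B → 0 is exact, then 0 → M'/I^nM' → M/I^nM → M''/I^nM'' → 0 is exact for all n. -/
open TensorProduct

theorem smul_top_le_comap_smul_top' {A M N : Type} [CommRing A]
    [AddCommGroup M] [Module A M] [AddCommGroup N] [Module A N]
    (f : M →ₗ[A] N) (I : Ideal A) :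
    I • (⊤ : Submodule A M) ≤ (I • (⊤ : Submodule A N)).comap f := by
  rw [← Submodule.map_le_iff_le_comap, Submodule.map_smul'']
  exact smul_mono_right I le_top

/-- The map `M/IⁿM → N/IⁿN` induced by an `A`-linear map `f : M → N`. -/
noncomputable def quotPowMap {A M N : Type} [CommRing A]
    [AddCommGroup M] [Module A M] [AddCommGroup N] [Module A N]
    (f : M →ₗ[A] N) (I : Ideal A) (n : ℕ) :
    (M ⧸ (I ^ n • ⊤ : Submodule A M)) →ₗ[A] (N ⧸ (I ^ n • ⊤ : Submodule A N)) :=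
  Submodule.mapQ _ _ f (smul_top_le_comap_smul_top' f (I ^ n))


section AuxQuotPow
variable {A M N P : Type} [CommRing A]
    [AddCommGroup M] [Module A M] [AddCommGroup N] [Module A N]
    [AddCommGroup P] [Module A P]

theorem quotPowMap_comp (f : M →ₗ[A] N) (g : N →ₗ[A] P) (I : Ideal A) (n : ℕ) :
    quotPowMap (g ∘ₗ f) I n = (quotPowMap g I n) ∘ₗ (quotPowMap f I n) := by
  apply Submodule.linearMap_qext; ext x; simp [quotPowMap, Submodule.mapQ_apply]

theorem quotPowMap_id (I : Ideal A) (n : ℕ) :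
    quotPowMap (LinearMap.id : M →ₗ[A] M) I n = LinearMap.id := by
  apply Submodule.linearMap_qext; ext x; simp [quotPowMap, Submodule.mapQ_apply]

theorem quotPowMap_add (f g : M →ₗ[A] N) (I : Ideal A) (n : ℕ) :
    quotPowMap (f + g) I n = quotPowMap f I n + quotPowMap g I n := by
  apply Submodule.linearMap_qext; ext x; simp [quotPowMap, Submodule.mapQ_apply]

theorem quotPowMap_zero (I : Ideal A) (n : ℕ) :
    quotPowMap (0 : M →ₗ[A] N) I n = 0 := by
  apply Submodule.linearMap_qext; ext x; simp [quotPowMap, Submodule.mapQ_apply]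
end AuxQuotPow

/-- Let `A` be a commutative ring, `I ⊆ A` a finitely generated ideal, `B` a
faithfully flat `A`-algebra, and `M' → M → M''` maps of finite projective `A`-modules.  If
`0 → M' ⊗_A B → M ⊗_A B → M'' ⊗_A B → 0` is exact, then
`0 → M'/IⁿM' → M/IⁿM → M''/IⁿM'' → 0` is exact for all `n`. -/
theorem quotient_sequences_exact_of_base_change_exact
    {A B M' M M'' : Type} [CommRing A] [CommRing B] [Algebra A B]
    [Module.FaithfullyFlat A B]
    [AddCommGroup M'] [Module A M'] [Module.Finite A M'] [Module.Projective A M']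
    [AddCommGroup M] [Module A M] [Module.Finite A M] [Module.Projective A M]
    [AddCommGroup M''] [Module A M''] [Module.Finite A M''] [Module.Projective A M'']
    (I : Ideal A) (hI : I.FG)
    (f : M' →ₗ[A] M) (g : M →ₗ[A] M'')
    (hinj : Function.Injective (f.baseChange B))
    (hex : Function.Exact (f.baseChange B) (g.baseChange B))
    (hsurj : Function.Surjective (g.baseChange B)) :
    ∀ n : ℕ,
      Function.Injective (quotPowMap f I n) ∧
      Function.Exact (quotPowMap f I n) (quotPowMap g I n) ∧
      Function.Surjective (quotPowMap g I n) := by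
  -- rewrite baseChange as lTensor
  rw [LinearMap.baseChange_eq_ltensor] at hinj hsurj
  rw [LinearMap.baseChange_eq_ltensor, LinearMap.baseChange_eq_ltensor] at hex
  -- descend exactness
  have hexA : Function.Exact f g := Module.FaithfullyFlat.lTensor_reflects_exact A B f g hex
  -- descend injectivity of f
  have hinjA : Function.Injective f := by
    rw [← LinearMap.ker_eq_bot]
    have h0 : Function.Exact (0 : (PUnit.{1} →ₗ[A] M')) f := by
      apply Module.FaithfullyFlat.lTensor_reflects_exact A B (0 : PUnit.{1} →ₗ[A] M') f
      rw [LinearMap.lTensor_zero]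
      intro y
      constructor
      · intro hy
        have h2 : (f.lTensor B) y = (f.lTensor B) 0 := by simpa using hy
        exact ⟨0, by simpa using (hinj h2).symm⟩
      · rintro ⟨x, rfl⟩; simp
    rw [LinearMap.exact_iff] at h0
    simpa using h0
  -- descend surjectivity of g
  have hsurjA : Function.Surjective g := by
    rw [← LinearMap.range_eq_top]
    have h0 : Function.Exact g (0 : M'' →ₗ[A] PUnit.{1}) := by
      apply Module.FaithfullyFlat.lTensor_reflects_exact A B g 0
      rw [LinearMap.lTensor_zero]
      intro y
      simpa using hsurj y
    rw [LinearMap.exact_iff] at h0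
    simpa using h0.symm
  -- right splitting
  obtain ⟨s, hs⟩ := Module.projective_lifting_property g LinearMap.id
    (LinearMap.range_eq_top.1 (LinearMap.range_eq_top.2 hsurjA))
  -- left splitting
  set p : M →ₗ[A] M := LinearMap.id - s ∘ₗ g with hpdef
  have hp : ∀ x : M, p x ∈ LinearMap.range f := by
    intro x
    rw [← LinearMap.exact_iff.1 hexA, LinearMap.mem_ker]
    have h2 : g (s (g x)) = g x := LinearMap.congr_fun hs (g x)
    simp [hpdef, LinearMap.sub_apply, h2]
  let e : M' ≃ₗ[A] LinearMap.range f := LinearEquiv.ofInjective f hinjA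
  let r : M →ₗ[A] M' := e.symm.toLinearMap ∘ₗ p.codRestrict (LinearMap.range f) hp
  have hfr : f ∘ₗ r = p := by
    ext x
    have : f (e.symm ⟨p x, hp x⟩) = (⟨p x, hp x⟩ : LinearMap.range f) := by
      have := e.apply_symm_apply ⟨p x, hp x⟩
      exact congrArg Subtype.val this
    simpa [r, LinearMap.codRestrict] using this
  have hrf : r ∘ₗ f = LinearMap.id := by
    ext y
    apply hinjA
    show f (r (f y)) = f y
    have : f (r (f y)) = p (f y) := LinearMap.congr_fun hfr (f y)
    rw [this]
    have hgf : g (f y) = 0 := (hexA (f y)).2 ⟨y, rfl⟩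
    simp [hpdef, LinearMap.sub_apply, hgf]
  have hgf0 : g ∘ₗ f = 0 := by
    ext y; exact (hexA (f y)).2 ⟨y, rfl⟩
  -- the identity f ∘ r + s ∘ g = id
  have hid : f ∘ₗ r + s ∘ₗ g = LinearMap.id := by
    rw [hfr, hpdef]; abel
  -- now pass to quotients
  intro n
  set F := quotPowMap f I n
  set G := quotPowMap g I n
  set R := quotPowMap r I n
  set S := quotPowMap s I n
  have hRF : R ∘ₗ F = LinearMap.id := by
    rw [← quotPowMap_comp, hrf, quotPowMap_id]
  have hGS : G ∘ₗ S = LinearMap.id := by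
    rw [← quotPowMap_comp, hs, quotPowMap_id]
  have hGF : G ∘ₗ F = 0 := by
    rw [← quotPowMap_comp, hgf0, quotPowMap_zero]
  have hFRSG : F ∘ₗ R + S ∘ₗ G = LinearMap.id := by
    rw [← quotPowMap_comp, ← quotPowMap_comp, ← quotPowMap_add, hid, quotPowMap_id]
  refine ⟨?_, ?_, ?_⟩
  · intro x y hxy
    have hx := LinearMap.congr_fun hRF x
    have hy := LinearMap.congr_fun hRF y
    simp only [LinearMap.comp_apply, LinearMap.id_apply] at hx hy
    rw [← hx, ← hy, hxy]
  · intro x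
    constructor
    · intro hx
      refine ⟨R x, ?_⟩
      have h1 := LinearMap.congr_fun hFRSG x
      simpa [LinearMap.add_apply, hx] using h1
    · rintro ⟨y, rfl⟩
      exact LinearMap.congr_fun hGF y
  · intro y
    refine ⟨S y, LinearMap.congr_fun hGS y⟩
end

section
/- Let A be a commutative ring complete with respect to a finitely generated ideal I (i.e., A ≅ lim A/I^n), and let M', M, M'' be finite projective A-modules with maps M' → M → M''. If for every n the sequence 0 → M'/I^nM' → M/I^nM → M''/I^nM'' → 0 is exact, then 0 → M' → M → M'' → 0 is exact. -/
open Submodule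

/-- A module that embeds into a Hausdorff module is Hausdorff. -/
lemma isHausdorff_of_injective {A M N : Type*} [CommRing A] (I : Ideal A)
    [AddCommGroup M] [Module A M] [AddCommGroup N] [Module A N]
    (φ : M →ₗ[A] N) (hφ : Function.Injective φ) [IsHausdorff I N] :
    IsHausdorff I M := by
  constructor
  intro x hx
  have : φ x = 0 := by
    refine IsHausdorff.haus ‹IsHausdorff I N› _ fun n => ?_
    rw [SModEq.zero]
    have hmem : x ∈ (I ^ n • ⊤ : Submodule A M) := (SModEq.zero).mp (hx n)
    have h : φ x ∈ Submodule.map φ (I ^ n • ⊤) := ⟨x, hmem, rfl⟩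
    rw [Submodule.map_smul''] at h
    have hle : I ^ n • Submodule.map φ ⊤ ≤ I ^ n • (⊤ : Submodule A N) :=
      smul_mono_right _ le_top
    exact hle h
  exact hφ (by rw [this, map_zero])

instance isHausdorff_pi {A : Type*} [CommRing A] (I : Ideal A) [IsHausdorff I A] (s : ℕ) :
    IsHausdorff I (Fin s → A) := by
  constructor
  intro x hx
  funext i
  refine IsHausdorff.haus ‹IsHausdorff I A› (x i) fun n => ?_
  rw [SModEq.zero]
  have h := hx n
  rw [SModEq.zero] at h
  have : x i ∈ Submodule.map (LinearMap.proj i) (I ^ n • (⊤ : Submodule A (Fin s → A))) :=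
    ⟨x, h, rfl⟩
  rw [Submodule.map_smul''] at this
  have hle : I ^ n • Submodule.map (LinearMap.proj (R := A) (φ := fun _ : Fin s => A) i) ⊤ ≤
      I ^ n • (⊤ : Submodule A A) := smul_mono_right _ le_top
  exact hle this

lemma isHausdorff_of_fin_proj {A M : Type*} [CommRing A] (I : Ideal A) [IsHausdorff I A]
    [AddCommGroup M] [Module A M] [Module.Finite A M] [Module.Projective A M] :
    IsHausdorff I M := by
  obtain ⟨s, p, hp⟩ := Module.Finite.exists_fin' A M
  obtain ⟨ι, hι⟩ := Module.projective_lifting_property p LinearMap.id hp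
  have hinj : Function.Injective ι := by
    intro a b hab
    have := congrArg p hab
    calc a = p (ι a) := by rw [← LinearMap.comp_apply, hι]; rfl
    _ = p (ι b) := this
    _ = b := by rw [← LinearMap.comp_apply, hι]; rfl
  exact isHausdorff_of_injective I ι hinj


/-- Let `A` be a commutative ring which is complete with respect to a finitely
generated ideal `I`, and let `M' → M → M''` be maps of finite projective `A`-modules.  If for
every `n` the sequence `0 → M'/IⁿM' → M/IⁿM → M''/IⁿM'' → 0` is exact, then
`0 → M' → M → M'' → 0` is exact. -/
theorem exact_of_quotient_sequences_exact
    {A M' M M'' : Type} [CommRing A]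
    (I : Ideal A) (hI : I.FG) [IsAdicComplete I A]
    [AddCommGroup M'] [Module A M'] [Module.Finite A M'] [Module.Projective A M']
    [AddCommGroup M] [Module A M] [Module.Finite A M] [Module.Projective A M]
    [AddCommGroup M''] [Module A M''] [Module.Finite A M''] [Module.Projective A M'']
    (f : M' →ₗ[A] M) (g : M →ₗ[A] M'')
    (hn : ∀ n : ℕ,
      Function.Injective (quotPowMap f I n) ∧
      Function.Exact (quotPowMap f I n) (quotPowMap g I n) ∧
      Function.Surjective (quotPowMap g I n)) :
    Function.Injective f ∧ Function.Exact f g ∧ Function.Surjective g := by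
  have hHM' : IsHausdorff I M' := isHausdorff_of_fin_proj I
  have hHM'' : IsHausdorff I M'' := isHausdorff_of_fin_proj I
  have hjac : I ≤ Ideal.jacobson ⊥ := IsAdicComplete.le_jacobson_bot I
  -- g ∘ f = 0
  have hgf : ∀ x : M', g (f x) = 0 := by
    intro x
    refine IsHausdorff.haus hHM'' _ fun n => ?_
    rw [SModEq.zero]
    have h := (hn n).2.1.apply_apply_eq_zero (Submodule.Quotient.mk x)
    rw [quotPowMap, quotPowMap, Submodule.mapQ_apply, Submodule.mapQ_apply] at h
    exact (Submodule.Quotient.mk_eq_zero _).mp h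
  -- injectivity of f
  have hinjf : Function.Injective f := by
    rw [injective_iff_map_eq_zero]
    intro x hx
    refine IsHausdorff.haus hHM' x fun n => ?_
    rw [SModEq.zero]
    have h0 : quotPowMap f I n (Submodule.Quotient.mk x) = quotPowMap f I n 0 := by
      rw [quotPowMap, Submodule.mapQ_apply, hx, map_zero]
      simp
    have := (hn n).1 h0
    exact (Submodule.Quotient.mk_eq_zero _).mp this
  -- surjectivity of g via Nakayama
  have hsurg : Function.Surjective g := by
    rw [← LinearMap.range_eq_top]
    rw [← top_le_iff]
    refine Submodule.le_of_le_smul_of_le_jacobson_bot Module.Finite.fg_top hjac ?_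
    intro x _
    obtain ⟨c, hc⟩ := (hn 1).2.2 (Submodule.Quotient.mk x)
    obtain ⟨m, rfl⟩ := Submodule.Quotient.mk_surjective _ c
    rw [quotPowMap, Submodule.mapQ_apply, Submodule.Quotient.eq] at hc
    have hmem : x - g m ∈ I • (⊤ : Submodule A M'') := by
      have := neg_mem hc
      simpa [pow_one] using this
    have : x = g m + (x - g m) := by abel
    rw [this]
    exact Submodule.add_mem_sup (LinearMap.mem_range_self g m) hmem
  -- exactness via splitting and Nakayama
  have hexact : Function.Exact f g := by
    rw [LinearMap.exact_iff]
    refine le_antisymm ?_ ?_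
    · -- ker g ≤ range f
      obtain ⟨σ, hσ⟩ := Module.projective_lifting_property g LinearMap.id hsurg
      set K := LinearMap.ker g
      have hπmem : ∀ m : M, m - σ (g m) ∈ K := by
        intro m
        simp only [K, LinearMap.mem_ker, map_sub]
        have : g (σ (g m)) = g m := by
          rw [← LinearMap.comp_apply, hσ]; rfl
        rw [this, sub_self]
      let π : M →ₗ[A] K := (LinearMap.id - σ ∘ₗ g).codRestrict K (fun m => hπmem m)
      have hπ : ∀ m : M, (π m : M) = m - σ (g m) := fun m => rfl
      let f' : M' →ₗ[A] K := f.codRestrict K (fun x => hgf x)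
      have hKfin : Module.Finite A K := by
        have hπsur : Function.Surjective π := by
          intro k
          refine ⟨(k : M), ?_⟩
          ext
          rw [hπ]
          have : g (k : M) = 0 := k.2
          rw [this, map_zero, sub_zero]
        exact Module.Finite.of_surjective π hπsur
      have hrange : (⊤ : Submodule A K) ≤ LinearMap.range f' := by
        refine Submodule.le_of_le_smul_of_le_jacobson_bot (hKfin.fg_top) hjac ?_
        rintro ⟨k, hk⟩ _
        have h0 : quotPowMap g I 1 (Submodule.Quotient.mk k) = 0 := by
          rw [quotPowMap, Submodule.mapQ_apply]
          have : g k = 0 := hk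
          rw [this]
          simp
        obtain ⟨c, hc⟩ := ((hn 1).2.1 _).mp h0
        obtain ⟨y, rfl⟩ := Submodule.Quotient.mk_surjective _ c
        rw [quotPowMap, Submodule.mapQ_apply, Submodule.Quotient.eq] at hc
        -- hc : f y - k ∈ I ^ 1 • ⊤
        have hc1 : f y - k ∈ (I • ⊤ : Submodule A M) := by simpa [pow_one] using hc
        have hπk : π (f y - k) = f' y - ⟨k, hk⟩ := by
          ext
          rw [hπ]
          have h1 : g (f y - k) = 0 := by
            have hgk : g k = 0 := hk
            rw [map_sub, hgf y, hgk, sub_zero]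
          rw [h1, map_zero, sub_zero]
          rfl
        have hmem : π (f y - k) ∈ (I • ⊤ : Submodule A K) := by
          have h1 : π (f y - k) ∈ Submodule.map π (I • ⊤) := ⟨_, hc1, rfl⟩
          rw [Submodule.map_smul''] at h1
          have hle : I • Submodule.map π ⊤ ≤ I • (⊤ : Submodule A K) :=
            smul_mono_right _ le_top
          exact hle h1
        rw [hπk] at hmem
        have : (⟨k, hk⟩ : K) = f' y - (f' y - ⟨k, hk⟩) := by abel
        rw [this]
        exact Submodule.sub_mem_sup (LinearMap.mem_range_self f' y) hmem
      intro m hm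
      obtain ⟨y, hy⟩ := hrange (Submodule.mem_top : (⟨m, hm⟩ : K) ∈ ⊤)
      exact ⟨y, congrArg Subtype.val hy⟩
    · -- range f ≤ ker g
      rintro _ ⟨x, rfl⟩
      exact hgf x
  exact ⟨hinjf, hexact, hsurg⟩
end
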